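/- arXiv:cond-mat/9404030 — 2 statements merged into one kernel-verified Lean document; each statement's English description precedes it below -/
import Mathlib

section
/- In the I^(6) block-spin model (2D Ising with every 2×2 block constrained to zero magnetization), the layered configuration consisting of alternating double rows of + and − spins (i.e., σ_{(x₁,x₂)} = +1 if x₂ mod 4 ∈ {0,3} and −1 if x₂ mod 4 ∈ {1,2}) is a ground state: it minimizes the Ising energy per site among all configurations in which every 2×2 block of the fixed partition has total spin zero. -/
/-- The spin value of a Boolean: `true ↦ +1`, `false ↦ −1`. -/
def spin (b : Bool) : ℤ := if b then 1 else -1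

/-- The zero-field nearest-neighbor Ising energy on the torus `(ℤ/L)²`
(periodic boundary conditions): `H(σ) = −∑_{<x,y>} σ_x σ_y`. -/
def torusEnergy (L : ℕ) [NeZero L] (σ : ZMod L × ZMod L → Bool) : ℤ :=
  -∑ v : ZMod L × ZMod L,
    (spin (σ v) * spin (σ (v + (1, 0))) + spin (σ v) * spin (σ (v + (0, 1))))

/-- The lower-left corner of the `p`-th block of the fixed partition of the torus of
side `L` into 2×2 blocks. -/
def blockCorner (L : ℕ) (p : Fin (L / 2) × Fin (L / 2)) : ZMod L × ZMod L :=
  (((2 * p.1.1 : ℕ) : ZMod L), ((2 * p.2.1 : ℕ) : ZMod L))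

/-- The `I⁽⁶⁾` constraint: every 2×2 block of the fixed partition has total spin zero. -/
def P6 (L : ℕ) (σ : ZMod L × ZMod L → Bool) : Prop :=
  ∀ p : Fin (L / 2) × Fin (L / 2),
    spin (σ (blockCorner L p)) + spin (σ (blockCorner L p + (1, 0))) +
    spin (σ (blockCorner L p + (0, 1))) + spin (σ (blockCorner L p + (1, 1))) = 0

/-- The row-layered configuration: alternating double rows of `+` and `−` spins,
`σ_{(x₁,x₂)} = +1` iff `x₂ mod 4 ∈ {0,3}`. -/
def layered (L : ℕ) [NeZero L] (v : ZMod L × ZMod L) : Bool :=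
  v.2.val % 4 = 0 ∨ v.2.val % 4 = 3

/-! ### Auxiliary machinery -/

/-- The summand of `torusEnergy` at `v` (so `torusEnergy = -∑ bterm`). -/
def bterm (L : ℕ) [NeZero L] (σ : ZMod L × ZMod L → Bool) (v : ZMod L × ZMod L) : ℤ :=
  spin (σ v) * spin (σ (v + (1, 0))) + spin (σ v) * spin (σ (v + (0, 1)))

lemma torusEnergy_eq (L : ℕ) [NeZero L] (σ : ZMod L × ZMod L → Bool) :
    torusEnergy L σ = -∑ v : ZMod L × ZMod L, bterm L σ v := rfl

lemma spin_mul_le (u w : Bool) : spin u * spin w ≤ 1 := by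
  cases u <;> cases w <;> simp [spin]

lemma spin_mul_self (u : Bool) : spin u * spin u = 1 := by
  cases u <;> simp [spin]

/-- Per-block bound: given the zero-magnetization constraint of a 2×2 block
`{a, b, c, d}`, the eight bond terms rooted at the block sum to at most `4`. -/
lemma quad {L : ℕ} [NeZero L] (σ : ZMod L × ZMod L → Bool) (a b c d : ZMod L × ZMod L)
    (hab : a + (1, 0) = b) (hac : a + (0, 1) = c)
    (hbd : b + (0, 1) = d) (hcd : c + (1, 0) = d)
    (h : spin (σ a) + spin (σ b) + spin (σ c) + spin (σ d) = 0) :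
    bterm L σ a + bterm L σ b + bterm L σ c + bterm L σ d ≤ 4 := by
  unfold bterm
  rw [hab, hac, hbd, hcd]
  have h1 := spin_mul_le (σ b) (σ (b + (1, 0)))
  have h2 := spin_mul_le (σ c) (σ (c + (0, 1)))
  have h3 := spin_mul_le (σ d) (σ (d + (1, 0)))
  have h4 := spin_mul_le (σ d) (σ (d + (0, 1)))
  have hbc : spin (σ b) + spin (σ c) = -(spin (σ a) + spin (σ d)) := by linarith
  have hI : spin (σ a) * spin (σ b) + spin (σ a) * spin (σ c) +
      spin (σ b) * spin (σ d) + spin (σ c) * spin (σ d) =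
      -(spin (σ a) + spin (σ d)) ^ 2 := by
    calc spin (σ a) * spin (σ b) + spin (σ a) * spin (σ c) +
        spin (σ b) * spin (σ d) + spin (σ c) * spin (σ d)
        = (spin (σ a) + spin (σ d)) * (spin (σ b) + spin (σ c)) := by ring
      _ = -(spin (σ a) + spin (σ d)) ^ 2 := by rw [hbc]; ring
  nlinarith [sq_nonneg (spin (σ a) + spin (σ d))]

lemma enc_eq {L m : ℕ} [NeZero L] (hm : 2 * m = L) {q q' : Fin m} {r r' : Fin 2}
    (h : ((2 * q.1 + r.1 : ℕ) : ZMod L) = ((2 * q'.1 + r'.1 : ℕ) : ZMod L)) :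
    q = q' ∧ r = r' := by
  have hq := q.2; have hq' := q'.2; have hr := r.2; have hr' := r'.2
  have h1 : 2 * q.1 + r.1 < L := by omega
  have h2 : 2 * q'.1 + r'.1 < L := by omega
  have := congrArg ZMod.val h
  rw [ZMod.val_cast_of_lt h1, ZMod.val_cast_of_lt h2] at this
  exact ⟨Fin.ext (by omega), Fin.ext (by omega)⟩

lemma F_bij {L m : ℕ} [NeZero L] (hm : 2 * m = L) :
    Function.Bijective (fun x : Fin m × Fin 2 => ((2 * x.1.1 + x.2.1 : ℕ) : ZMod L)) := by
  rw [Fintype.bijective_iff_injective_and_card]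
  constructor
  · rintro ⟨q, r⟩ ⟨q', r'⟩ h
    obtain ⟨h1, h2⟩ := enc_eq hm h
    exact Prod.ext h1 h2
  · simp [ZMod.card]; omega

lemma G_bij {L m : ℕ} [NeZero L] (hm : 2 * m = L) :
    Function.Bijective (fun x : (Fin m × Fin m) × (Fin 2 × Fin 2) =>
      ((((2 * x.1.1.1 + x.2.1.1 : ℕ) : ZMod L), ((2 * x.1.2.1 + x.2.2.1 : ℕ) : ZMod L)) :
        ZMod L × ZMod L)) := by
  rw [Fintype.bijective_iff_injective_and_card]
  constructor
  · rintro ⟨⟨q1, q2⟩, ⟨r1, r2⟩⟩ ⟨⟨q1', q2'⟩, ⟨r1', r2'⟩⟩ h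
    simp only [Prod.mk.injEq] at h ⊢
    obtain ⟨ha, hb⟩ := h
    obtain ⟨e1, e2⟩ := enc_eq hm ha
    obtain ⟨e3, e4⟩ := enc_eq hm hb
    exact ⟨⟨e1, e3⟩, ⟨e2, e4⟩⟩
  · simp [ZMod.card]
    subst hm; ring

lemma sum_blocks {L m : ℕ} [NeZero L] (hm : 2 * m = L) (f : ZMod L × ZMod L → ℤ) :
    ∑ v : ZMod L × ZMod L, f v =
      ∑ p : Fin m × Fin m, ∑ r : Fin 2 × Fin 2,
        f (((2 * p.1.1 + r.1.1 : ℕ) : ZMod L), ((2 * p.2.1 + r.2.1 : ℕ) : ZMod L)) := by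
  have h := Fintype.sum_bijective _ (G_bij hm)
    (fun x : (Fin m × Fin m) × (Fin 2 × Fin 2) =>
      f (((2 * x.1.1.1 + x.2.1.1 : ℕ) : ZMod L), ((2 * x.1.2.1 + x.2.2.1 : ℕ) : ZMod L)))
    f (fun x => rfl)
  rw [← h, Fintype.sum_prod_type]

/-- The energy lower bound: for any `σ` satisfying `P6`, the bond sum is at most `L²`. -/
lemma bond_sum_le {L : ℕ} [NeZero L] (hL : 4 ∣ L) (σ : ZMod L × ZMod L → Bool)
    (hσ : P6 L σ) : ∑ v : ZMod L × ZMod L, bterm L σ v ≤ (L : ℤ) ^ 2 := by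
  have hm : 2 * (L / 2) = L := by omega
  rw [sum_blocks hm]
  have key : ∀ p : Fin (L / 2) × Fin (L / 2),
      ∑ r : Fin 2 × Fin 2,
        bterm L σ (((2 * p.1.1 + r.1.1 : ℕ) : ZMod L), ((2 * p.2.1 + r.2.1 : ℕ) : ZMod L))
        ≤ 4 := by
    intro p
    have e10 : ((((2 * p.1.1 : ℕ) : ZMod L), ((2 * p.2.1 : ℕ) : ZMod L)) : ZMod L × ZMod L)
        + (1, 0) = (((2 * p.1.1 + 1 : ℕ) : ZMod L), ((2 * p.2.1 : ℕ) : ZMod L)) := by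
      simp [Prod.ext_iff]
    have e01 : ((((2 * p.1.1 : ℕ) : ZMod L), ((2 * p.2.1 : ℕ) : ZMod L)) : ZMod L × ZMod L)
        + (0, 1) = (((2 * p.1.1 : ℕ) : ZMod L), ((2 * p.2.1 + 1 : ℕ) : ZMod L)) := by
      simp [Prod.ext_iff]
    have hbd : (((2 * p.1.1 + 1 : ℕ) : ZMod L), ((2 * p.2.1 : ℕ) : ZMod L))
        + ((0 : ZMod L), (1 : ZMod L))
        = (((2 * p.1.1 + 1 : ℕ) : ZMod L), ((2 * p.2.1 + 1 : ℕ) : ZMod L)) := by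
      simp [Prod.ext_iff]
    have hcd : (((2 * p.1.1 : ℕ) : ZMod L), ((2 * p.2.1 + 1 : ℕ) : ZMod L))
        + ((1 : ZMod L), (0 : ZMod L))
        = (((2 * p.1.1 + 1 : ℕ) : ZMod L), ((2 * p.2.1 + 1 : ℕ) : ZMod L)) := by
      simp [Prod.ext_iff]
    have hcon := hσ p
    simp only [blockCorner] at hcon
    rw [e10, e01, show ((((2 * p.1.1 : ℕ) : ZMod L), ((2 * p.2.1 : ℕ) : ZMod L)) :
        ZMod L × ZMod L) + (1, 1)
        = (((2 * p.1.1 + 1 : ℕ) : ZMod L), ((2 * p.2.1 + 1 : ℕ) : ZMod L)) from by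
      simp [Prod.ext_iff]] at hcon
    have hq := quad σ _ _ _ _ e10 e01 hbd hcd hcon
    rw [Fintype.sum_prod_type]
    simp only [Fin.sum_univ_two, Fin.val_zero, Fin.val_one, Nat.add_zero]
    linarith [hq]
  calc ∑ p : Fin (L / 2) × Fin (L / 2), ∑ r : Fin 2 × Fin 2,
        bterm L σ (((2 * p.1.1 + r.1.1 : ℕ) : ZMod L), ((2 * p.2.1 + r.2.1 : ℕ) : ZMod L))
      ≤ ∑ _p : Fin (L / 2) × Fin (L / 2), (4 : ℤ) := Finset.sum_le_sum fun p _ => key p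
    _ = ((L / 2) * (L / 2) : ℕ) * 4 := by
        simp [Finset.sum_const, Finset.card_univ]
    _ = (L : ℤ) ^ 2 := by
        have h2 : ((L / 2 : ℕ) : ℤ) * 2 = (L : ℤ) := by
          exact_mod_cast congrArg (Nat.cast : ℕ → ℤ) (by omega : L / 2 * 2 = L)
        rw [Nat.cast_mul]
        linear_combination (2 * ((L / 2 : ℕ) : ℤ) + (L : ℤ)) * h2

/-! ### The layered configuration -/

lemma layered_horiz {L : ℕ} [NeZero L] (v : ZMod L × ZMod L) :
    layered L (v + (1, 0)) = layered L v := by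
  simp [layered, Prod.snd_add]

lemma layered_vert {L : ℕ} [NeZero L] (hL : 4 ∣ L) (v : ZMod L × ZMod L) :
    spin (layered L v) * spin (layered L (v + (0, 1)))
      = if v.2.val % 2 = 0 then -1 else 1 := by
  have hL4 : 4 ≤ L := Nat.le_of_dvd (Nat.pos_of_ne_zero (NeZero.ne L)) hL
  have h2 : (v + ((0 : ZMod L), (1 : ZMod L))).2 = v.2 + 1 := by
    rw [Prod.snd_add]
  have hvlt : v.2.val < L := ZMod.val_lt _
  have h1L : 1 % L = 1 := Nat.mod_eq_of_lt (by omega)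
  have hval : (v.2 + 1).val = (v.2.val + 1) % L := by
    rw [ZMod.val_add, ZMod.val_one_eq_one_mod, h1L]
  have hcase : (v.2.val + 1) % L = if v.2.val + 1 = L then 0 else v.2.val + 1 := by
    split_ifs with h
    · rw [h, Nat.mod_self]
    · exact Nat.mod_eq_of_lt (by omega)
  obtain ⟨k, hk⟩ := hL
  simp only [layered, spin, h2, hval, decide_eq_true_eq, hcase]
  by_cases hw : v.2.val + 1 = L
  · rw [if_pos hw]
    split_ifs <;> omega
  · rw [if_neg hw]
    split_ifs <;> omega

lemma layered_bond_sum {L : ℕ} [NeZero L] (hL : 4 ∣ L) :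
    ∑ v : ZMod L × ZMod L, bterm L (layered L) v = (L : ℤ) ^ 2 := by
  have hm : 2 * (L / 2) = L := by omega
  have h1 : ∀ v : ZMod L × ZMod L,
      bterm L (layered L) v = 1 + (if v.2.val % 2 = 0 then (-1 : ℤ) else 1) := by
    intro v
    rw [bterm, layered_horiz, spin_mul_self, layered_vert hL]
  rw [Finset.sum_congr rfl fun v _ => h1 v, Finset.sum_add_distrib]
  have hc : ∑ _v : ZMod L × ZMod L, (1 : ℤ) = (L : ℤ) ^ 2 := by
    simp [Finset.card_univ, ZMod.card]
    ring
  rw [hc]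
  have hz : ∑ v : ZMod L × ZMod L, (if v.2.val % 2 = 0 then (-1 : ℤ) else 1) = 0 := by
    rw [Fintype.sum_prod_type]
    have hrow : ∑ y : ZMod L, (if y.val % 2 = 0 then (-1 : ℤ) else 1) = 0 := by
      rw [← Fintype.sum_bijective _ (F_bij hm)
          (fun x : Fin (L / 2) × Fin 2 =>
            if ((2 * x.1.1 + x.2.1 : ℕ) : ZMod L).val % 2 = 0 then (-1 : ℤ) else 1)
          _ (fun x => rfl)]
      rw [Fintype.sum_prod_type]
      have hq : ∀ q : Fin (L / 2),
          ∑ r : Fin 2,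
            (if ((2 * q.1 + r.1 : ℕ) : ZMod L).val % 2 = 0 then (-1 : ℤ) else 1) = 0 := by
        intro q
        have hqlt := q.2
        have hv0 : ((2 * q.1 + (0 : ℕ) : ℕ) : ZMod L).val = 2 * q.1 := by
          rw [Nat.add_zero]
          exact ZMod.val_cast_of_lt (by omega)
        have hv1 : ((2 * q.1 + (1 : ℕ) : ℕ) : ZMod L).val = 2 * q.1 + 1 :=
          ZMod.val_cast_of_lt (by omega)
        rw [Fin.sum_univ_two]
        simp only [Fin.val_zero, Fin.val_one, hv0, hv1]
        rw [if_pos (by omega), if_neg (by omega)]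
        ring
      exact Finset.sum_eq_zero fun q _ => hq q
    calc ∑ _x : ZMod L, ∑ y : ZMod L, (if y.val % 2 = 0 then (-1 : ℤ) else 1)
        = ∑ _x : ZMod L, (0 : ℤ) := Finset.sum_congr rfl fun x _ => hrow
      _ = 0 := by simp
  rw [hz, add_zero]

lemma P6_layered {L : ℕ} [NeZero L] (hL : 4 ∣ L) : P6 L (layered L) := by
  intro p
  have hb := p.2.2
  have hL4 : 4 ≤ L := Nat.le_of_dvd (Nat.pos_of_ne_zero (NeZero.ne L)) hL
  have e10 : ((((2 * p.1.1 : ℕ) : ZMod L), ((2 * p.2.1 : ℕ) : ZMod L)) : ZMod L × ZMod L)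
      + (1, 0) = (((2 * p.1.1 + 1 : ℕ) : ZMod L), ((2 * p.2.1 : ℕ) : ZMod L)) := by
    simp [Prod.ext_iff]
  have e01 : ((((2 * p.1.1 : ℕ) : ZMod L), ((2 * p.2.1 : ℕ) : ZMod L)) : ZMod L × ZMod L)
      + (0, 1) = (((2 * p.1.1 : ℕ) : ZMod L), ((2 * p.2.1 + 1 : ℕ) : ZMod L)) := by
    simp [Prod.ext_iff]
  have e11 : ((((2 * p.1.1 : ℕ) : ZMod L), ((2 * p.2.1 : ℕ) : ZMod L)) : ZMod L × ZMod L)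
      + (1, 1) = (((2 * p.1.1 + 1 : ℕ) : ZMod L), ((2 * p.2.1 + 1 : ℕ) : ZMod L)) := by
    simp [Prod.ext_iff]
  have hv1 : ((2 * p.2.1 : ℕ) : ZMod L).val = 2 * p.2.1 :=
    ZMod.val_cast_of_lt (by omega)
  have hv2 : ((2 * p.2.1 + 1 : ℕ) : ZMod L).val = 2 * p.2.1 + 1 :=
    ZMod.val_cast_of_lt (by omega)
  simp only [blockCorner]
  rw [e10, e01, e11]
  simp only [layered, spin, decide_eq_true_eq, hv1, hv2]
  split_ifs <;> omega

/-- On a torus of side `L` divisible by 4, the row-layered configuration satisfies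
the zero-block-magnetization constraint and is a ground state: it minimizes the Ising
energy among all zero-block-magnetization configurations. -/
theorem stmt10 (L : ℕ) [NeZero L] (hL : 4 ∣ L) :
    P6 L (layered L) ∧
    ∀ σ : ZMod L × ZMod L → Bool, P6 L σ →
      torusEnergy L (layered L) ≤ torusEnergy L σ := by
  refine ⟨P6_layered hL, fun σ hσ => ?_⟩
  rw [torusEnergy_eq, torusEnergy_eq, layered_bond_sum hL]
  exact neg_le_neg (bond_sum_le hL σ hσ)
end

section
/- On a torus of side L divisible by 4, consider the constrained Ising model I^(6), in which each 2×2 block of a fixed partition has total spin zero. The minimal value of H = −∑_{<x,y>} σ_x σ_y over zero-block-magnetization configurations is −L², i.e. half of the unconstrained minimum −2L², and it is attained exactly by the four layered configurations (alternating double rows or double columns of + and −). -/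
/-- Row-layered configuration with pattern `(+,−,−,+)` in the second coordinate. -/
def rowLayerA (L : ℕ) [NeZero L] (v : ZMod L × ZMod L) : Bool :=
  v.2.val % 4 = 0 ∨ v.2.val % 4 = 3

/-- Row-layered configuration with pattern `(−,+,+,−)` in the second coordinate. -/
def rowLayerB (L : ℕ) [NeZero L] (v : ZMod L × ZMod L) : Bool :=
  v.2.val % 4 = 1 ∨ v.2.val % 4 = 2

/-- Column-layered configuration with pattern `(+,−,−,+)` in the first coordinate. -/
def colLayerA (L : ℕ) [NeZero L] (v : ZMod L × ZMod L) : Bool :=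
  v.1.val % 4 = 0 ∨ v.1.val % 4 = 3

/-- Column-layered configuration with pattern `(−,+,+,−)` in the first coordinate. -/
def colLayerB (L : ℕ) [NeZero L] (v : ZMod L × ZMod L) : Bool :=
  v.1.val % 4 = 1 ∨ v.1.val % 4 = 2

/-! ### Auxiliary material -/

section Aux

lemma sum_val (L : ℕ) [NeZero L] (g : ℕ → ℤ) :
    ∑ y : ZMod L, g y.val = ∑ n ∈ Finset.range L, g n := by
  apply Finset.sum_bij' (fun (y : ZMod L) _ => y.val) (fun n _ => (n : ZMod L))
  · intro a _; exact Finset.mem_range.mpr (ZMod.val_lt a)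
  · intro n _; exact Finset.mem_univ _
  · intro a _; exact ZMod.natCast_rightInverse a
  · intro n hn; rw [ZMod.val_natCast, Nat.mod_eq_of_lt (Finset.mem_range.mp hn)]
  · intro a _; rfl

lemma psum (u : ℕ → ℤ) (hp : ∀ n, u n = u (n % 4)) (k : ℕ) :
    ∑ n ∈ Finset.range (4 * k), u n = k * (u 0 + u 1 + u 2 + u 3) := by
  induction k with
  | zero => simp
  | succ k ih =>
    have h4 : 4 * (k + 1) = (4 * k) + 1 + 1 + 1 + 1 := by ring
    rw [h4, Finset.sum_range_succ, Finset.sum_range_succ, Finset.sum_range_succ,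
      Finset.sum_range_succ, ih]
    have e0 : u (4 * k) = u 0 := by rw [hp]; norm_num [Nat.mul_mod_right]
    have e1 : u (4 * k + 1) = u 1 := by rw [hp (4*k+1)]; congr 1; omega
    have e2 : u (4 * k + 1 + 1) = u 2 := by rw [hp (4*k+1+1)]; congr 1; omega
    have e3 : u (4 * k + 1 + 1 + 1) = u 3 := by rw [hp (4*k+1+1+1)]; congr 1; omega
    rw [e0, e1, e2, e3]; push_cast; ring

lemma rowEnergy (L : ℕ) [NeZero L] (hL : 4 ∣ L) (q : ℕ → Bool)
    (hq : ∀ n, q n = q (n % 4))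
    (hbal : spin (q 0) * spin (q 1) + spin (q 1) * spin (q 2) +
      spin (q 2) * spin (q 3) + spin (q 3) * spin (q 0) = 0)
    (σ : ZMod L × ZMod L → Bool) (hσ : ∀ v, σ v = q v.2.val) :
    torusEnergy L σ = -(L : ℤ) ^ 2 := by
  obtain ⟨k, hk⟩ := hL
  have hstep : ∀ v : ZMod L × ZMod L,
      spin (σ v) * spin (σ (v + (1, 0))) + spin (σ v) * spin (σ (v + (0, 1)))
      = 1 + spin (q (v.2.val % 4)) * spin (q ((v.2.val + 1) % 4)) := by
    intro v
    have h1 : (v + (1, 0)).2 = v.2 := by simp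
    have h2 : (v + (0, 1)).2 = v.2 + 1 := by simp
    have hv1 : σ (v + (1, 0)) = σ v := by rw [hσ, hσ, h1]
    have hL4 : 4 ≤ L := by have := NeZero.ne L; omega
    have hval : (v.2 + 1).val = (v.2.val + 1) % L := by
      rw [ZMod.val_add, ZMod.val_one_eq_one_mod, Nat.mod_eq_of_lt (by omega : 1 < L)]
    have hmod : ∀ n : ℕ, q (n % L) = q (n % 4) := by
      intro n; rw [hq (n % L), Nat.mod_mod_of_dvd _ (by omega : 4 ∣ L), ← hq]
    rw [hv1, hσ, hσ, h2, hval, hmod, hq v.2.val]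
    have : spin (q (v.2.val % 4)) * spin (q (v.2.val % 4)) = 1 := by
      rcases (q (v.2.val % 4)) <;> simp [spin]
    rw [this]
  unfold torusEnergy
  rw [Finset.sum_congr rfl (fun v _ => hstep v)]
  rw [Fintype.sum_prod_type]
  have inner : ∀ x : ZMod L,
      (∑ y : ZMod L, (1 + spin (q ((x, y).2.val % 4)) * spin (q (((x, y).2.val + 1) % 4))))
      = (L : ℤ) := by
    intro x
    have := sum_val L (fun n => 1 + spin (q (n % 4)) * spin (q ((n + 1) % 4)))
    simp only []
    rw [this, hk, psum]
    · norm_num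
      linear_combination (k : ℤ) * hbal
    · intro n
      have a1 : n % 4 % 4 = n % 4 := Nat.mod_mod_of_dvd n (dvd_refl 4)
      have a2 : (n % 4 + 1) % 4 = (n + 1) % 4 := by omega
      rw [a1, a2]
  rw [Finset.sum_congr rfl (fun x _ => inner x)]
  rw [Finset.sum_const, Finset.card_univ, ZMod.card]
  push_cast; ring

lemma torusEnergy_swap (L : ℕ) [NeZero L] (σ : ZMod L × ZMod L → Bool) :
    torusEnergy L (fun v => σ v.swap) = torusEnergy L σ := by
  unfold torusEnergy
  congr 1
  apply Fintype.sum_equiv (Equiv.prodComm (ZMod L) (ZMod L))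
  intro v
  obtain ⟨x, y⟩ := v
  simp only [Equiv.prodComm_apply, Prod.swap_prod_mk, Prod.mk_add_mk, add_zero]
  ring

lemma P6_row (L : ℕ) [NeZero L] (hL : 4 ∣ L) (q : ℕ → Bool)
    (hq : ∀ n, q n = q (n % 4))
    (h01 : spin (q 0) + spin (q 1) = 0) (h23 : spin (q 2) + spin (q 3) = 0)
    (σ : ZMod L × ZMod L → Bool) (hσ : ∀ v, σ v = q v.2.val) : P6 L σ := by
  intro p
  have key : ∀ u v : ZMod L, σ (u, v) = q (v.val % 4) := by
    intro u v; rw [hσ]; exact hq v.val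
  have c1 : blockCorner L p + (1, 0) = (((2 * p.1.1 : ℕ) : ZMod L) + 1, ((2 * p.2.1 : ℕ) : ZMod L)) := by
    simp [blockCorner, Prod.mk_add_mk]
  have csnd : ((2 * p.2.1 : ℕ) : ZMod L) + 1 = ((2 * p.2.1 + 1 : ℕ) : ZMod L) := by push_cast; ring
  have c2 : blockCorner L p + (0, 1) = (((2 * p.1.1 : ℕ) : ZMod L), ((2 * p.2.1 + 1 : ℕ) : ZMod L)) := by
    rw [Prod.ext_iff]
    exact ⟨by simp [blockCorner], csnd⟩
  have c3 : blockCorner L p + (1, 1) = (((2 * p.1.1 : ℕ) : ZMod L) + 1, ((2 * p.2.1 + 1 : ℕ) : ZMod L)) := by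
    rw [Prod.ext_iff]
    exact ⟨rfl, csnd⟩
  rw [c1, c2, c3, show blockCorner L p = (((2 * p.1.1 : ℕ) : ZMod L), ((2 * p.2.1 : ℕ) : ZMod L)) from rfl]
  rw [key, key, key, key]
  rw [ZMod.val_natCast, ZMod.val_natCast, Nat.mod_mod_of_dvd _ hL, Nat.mod_mod_of_dvd _ hL]
  rcases Nat.even_or_odd p.2.1 with he | ho
  · obtain ⟨t, ht⟩ := he
    have e1 : 2 * p.2.1 % 4 = 0 := by omega
    have e2 : (2 * p.2.1 + 1) % 4 = 1 := by omega
    rw [e1, e2]; linarith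
  · obtain ⟨t, ht⟩ := ho
    have e1 : 2 * p.2.1 % 4 = 2 := by omega
    have e2 : (2 * p.2.1 + 1) % 4 = 3 := by omega
    rw [e1, e2]; linarith

def qA (n : ℕ) : Bool := decide (n % 4 = 0 ∨ n % 4 = 3)
def qB (n : ℕ) : Bool := decide (n % 4 = 1 ∨ n % 4 = 2)

lemma qA_mod (n : ℕ) : qA n = qA (n % 4) := by
  simp only [qA, Nat.mod_mod_of_dvd n (dvd_refl 4)]
lemma qB_mod (n : ℕ) : qB n = qB (n % 4) := by
  simp only [qB, Nat.mod_mod_of_dvd n (dvd_refl 4)]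
lemma not_qA (n : ℕ) : (!qA n) = qB n := by
  unfold qA qB
  rcases (by omega : n%4=0 ∨ n%4=1 ∨ n%4=2 ∨ n%4=3) with h|h|h|h <;> simp [h]

lemma colLayerA_eq (L : ℕ) [NeZero L] : colLayerA L = fun v => rowLayerA L v.swap := rfl
lemma colLayerB_eq (L : ℕ) [NeZero L] : colLayerB L = fun v => rowLayerB L v.swap := rfl

lemma energy_rowLayerA (L : ℕ) [NeZero L] (hL : 4 ∣ L) :
    torusEnergy L (rowLayerA L) = -(L : ℤ) ^ 2 :=
  rowEnergy L hL qA qA_mod (by decide) _ (fun v => rfl)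

lemma energy_rowLayerB (L : ℕ) [NeZero L] (hL : 4 ∣ L) :
    torusEnergy L (rowLayerB L) = -(L : ℤ) ^ 2 :=
  rowEnergy L hL qB qB_mod (by decide) _ (fun v => rfl)

lemma energy_colLayerA (L : ℕ) [NeZero L] (hL : 4 ∣ L) :
    torusEnergy L (colLayerA L) = -(L : ℤ) ^ 2 := by
  rw [colLayerA_eq, torusEnergy_swap]; exact energy_rowLayerA L hL

lemma energy_colLayerB (L : ℕ) [NeZero L] (hL : 4 ∣ L) :
    torusEnergy L (colLayerB L) = -(L : ℤ) ^ 2 := by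
  rw [colLayerB_eq, torusEnergy_swap]; exact energy_rowLayerB L hL

lemma P6_rowLayerA (L : ℕ) [NeZero L] (hL : 4 ∣ L) : P6 L (rowLayerA L) :=
  P6_row L hL qA qA_mod (by decide) (by decide) _ (fun v => rfl)

/-! ### Block decomposition of the energy -/

def spinN (L : ℕ) [NeZero L] (σ : ZMod L × ZMod L → Bool) (u v : ℕ) : ℤ :=
  spin (σ ((u : ZMod L), (v : ZMod L)))

def blockSum (L : ℕ) [NeZero L] (σ : ZMod L × ZMod L → Bool) (i j : ℕ) : ℤ :=
  (spinN L σ (2*i) (2*j) * spinN L σ (2*i+1) (2*j)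
    + spinN L σ (2*i) (2*j) * spinN L σ (2*i) (2*j+1))
  + (spinN L σ (2*i+1) (2*j) * spinN L σ (2*i+2) (2*j)
    + spinN L σ (2*i+1) (2*j) * spinN L σ (2*i+1) (2*j+1))
  + (spinN L σ (2*i) (2*j+1) * spinN L σ (2*i+1) (2*j+1)
    + spinN L σ (2*i) (2*j+1) * spinN L σ (2*i) (2*j+2))
  + (spinN L σ (2*i+1) (2*j+1) * spinN L σ (2*i+2) (2*j+1)
    + spinN L σ (2*i+1) (2*j+1) * spinN L σ (2*i+1) (2*j+2))

noncomputable def pairEquiv (L m : ℕ) [NeZero L] (hm : L = 2 * m) : Fin m × Fin 2 ≃ ZMod L :=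
  Equiv.ofBijective (fun x => ((2 * x.1.1 + x.2.1 : ℕ) : ZMod L)) (by
    rw [Fintype.bijective_iff_surjective_and_card]
    constructor
    · intro x
      have hx : x.val < L := ZMod.val_lt x
      refine ⟨(⟨x.val / 2, by omega⟩, ⟨x.val % 2, by omega⟩), ?_⟩
      have h : 2 * (x.val / 2) + x.val % 2 = x.val := by omega
      show ((2 * (x.val / 2) + x.val % 2 : ℕ) : ZMod L) = x
      rw [h]
      exact ZMod.natCast_rightInverse x
    · simp [ZMod.card, hm]; ring)

lemma energy_blocks (L : ℕ) [NeZero L] (hm : L = 2 * (L / 2)) (σ : ZMod L × ZMod L → Bool) :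
    torusEnergy L σ = -∑ p : Fin (L / 2) × Fin (L / 2), blockSum L σ p.1.1 p.2.1 := by
  set m := L / 2 with hmdef
  set f : ZMod L × ZMod L → ℤ := fun v =>
    spin (σ v) * spin (σ (v + (1, 0))) + spin (σ v) * spin (σ (v + (0, 1))) with hf
  have fN : ∀ a b : ℕ, f ((a : ZMod L), (b : ZMod L))
      = spinN L σ a b * spinN L σ (a+1) b + spinN L σ a b * spinN L σ a (b+1) := by
    intro a b
    have h1 : ((a : ZMod L), (b : ZMod L)) + (1, 0) = (((a+1 : ℕ) : ZMod L), (b : ZMod L)) := by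
      rw [Prod.mk_add_mk]; push_cast; simp
    have h2 : ((a : ZMod L), (b : ZMod L)) + (0, 1) = (((a : ℕ) : ZMod L), ((b+1 : ℕ) : ZMod L)) := by
      rw [Prod.mk_add_mk]; push_cast; simp
    rw [hf]; dsimp only; rw [h1, h2]; rfl
  have key : ∑ v : ZMod L × ZMod L, f v = ∑ p : Fin m × Fin m, blockSum L σ p.1.1 p.2.1 := by
    let F : (Fin m × Fin m) × (Fin 2 × Fin 2) ≃ ZMod L × ZMod L :=
      (Equiv.prodProdProdComm (Fin m) (Fin m) (Fin 2) (Fin 2)).trans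
        ((pairEquiv L m hm).prodCongr (pairEquiv L m hm))
    rw [← Equiv.sum_comp F f, Fintype.sum_prod_type]
    apply Finset.sum_congr rfl
    intro p _
    have hFa : ∀ r s : Fin 2, F (p, (r, s))
        = (((2 * p.1.1 + r.1 : ℕ) : ZMod L), ((2 * p.2.1 + s.1 : ℕ) : ZMod L)) := by
      intro r s; rfl
    rw [Fintype.sum_prod_type]
    rw [Fin.sum_univ_two]
    rw [Fin.sum_univ_two, Fin.sum_univ_two]
    rw [hFa, hFa, hFa, hFa]
    simp only [Fin.val_zero, Fin.val_one, add_zero]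
    rw [fN, fN, fN, fN]
    unfold blockSum
    have e1 : 2 * p.1.1 + 1 + 1 = 2 * p.1.1 + 2 := by ring
    have e2 : 2 * p.2.1 + 1 + 1 = 2 * p.2.1 + 2 := by ring
    rw [e1, e2]
    ring
  unfold torusEnergy
  rw [← hf, key]

lemma P6_spinN (L : ℕ) [NeZero L] (σ : ZMod L × ZMod L → Bool) (h : P6 L σ)
    (p : Fin (L / 2) × Fin (L / 2)) :
    spinN L σ (2*p.1.1) (2*p.2.1) + spinN L σ (2*p.1.1+1) (2*p.2.1) +
    spinN L σ (2*p.1.1) (2*p.2.1+1) + spinN L σ (2*p.1.1+1) (2*p.2.1+1) = 0 := by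
  have := h p
  have c0 : blockCorner L p = (((2*p.1.1 : ℕ) : ZMod L), ((2*p.2.1 : ℕ) : ZMod L)) := rfl
  have c1 : blockCorner L p + (1, 0) = (((2*p.1.1+1 : ℕ) : ZMod L), ((2*p.2.1 : ℕ) : ZMod L)) := by
    rw [c0, Prod.mk_add_mk]; push_cast; simp
  have c2 : blockCorner L p + (0, 1) = (((2*p.1.1 : ℕ) : ZMod L), ((2*p.2.1+1 : ℕ) : ZMod L)) := by
    rw [c0, Prod.mk_add_mk]; push_cast; simp
  have c3 : blockCorner L p + (1, 1) = (((2*p.1.1+1 : ℕ) : ZMod L), ((2*p.2.1+1 : ℕ) : ZMod L)) := by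
    rw [c0, Prod.mk_add_mk]; push_cast; simp
  rw [c1, c2, c3, c0] at this
  unfold spinN
  linarith

lemma spinN_cases (L : ℕ) [NeZero L] (σ : ZMod L × ZMod L → Bool) (u v : ℕ) :
    spinN L σ u v = 1 ∨ spinN L σ u v = -1 := by
  unfold spinN spin; rcases σ _ <;> simp

lemma pm_mul_le_one {x y : ℤ} (hx : x = 1 ∨ x = -1) (hy : y = 1 ∨ y = -1) : x * y ≤ 1 := by
  rcases hx with h | h <;> rcases hy with h' | h' <;> rw [h, h'] <;> norm_num

lemma blockSum_le (L : ℕ) [NeZero L] (σ : ZMod L × ZMod L → Bool) (i j : ℕ)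
    (hz : spinN L σ (2*i) (2*j) + spinN L σ (2*i+1) (2*j) +
      spinN L σ (2*i) (2*j+1) + spinN L σ (2*i+1) (2*j+1) = 0) :
    blockSum L σ i j ≤ 4 := by
  unfold blockSum
  set A := spinN L σ (2*i) (2*j)
  set B := spinN L σ (2*i+1) (2*j)
  set C := spinN L σ (2*i) (2*j+1)
  set D := spinN L σ (2*i+1) (2*j+1)
  have hint : A*B + A*C + B*D + C*D = -(A+D)^2 := by linear_combination (A+D) * hz
  have e1 := pm_mul_le_one (spinN_cases L σ (2*i+1) (2*j)) (spinN_cases L σ (2*i+2) (2*j))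
  have e2 := pm_mul_le_one (spinN_cases L σ (2*i) (2*j+1)) (spinN_cases L σ (2*i) (2*j+2))
  have e3 := pm_mul_le_one (spinN_cases L σ (2*i+1) (2*j+1)) (spinN_cases L σ (2*i+2) (2*j+1))
  have e4 := pm_mul_le_one (spinN_cases L σ (2*i+1) (2*j+1)) (spinN_cases L σ (2*i+1) (2*j+2))
  nlinarith [sq_nonneg (A+D)]

lemma spin_mul_eq_one {a b : Bool} (h : spin a * spin b = 1) : a = b := by
  revert h; cases a <;> cases b <;> simp [spin]

lemma spin_add_eq_zero {a b : Bool} (h : spin a + spin b = 0) : a = !b := by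
  revert h; cases a <;> cases b <;> simp [spin]

lemma blockSum_eq (L : ℕ) [NeZero L] (σ : ZMod L × ZMod L → Bool) (i j : ℕ)
    (hz : spinN L σ (2*i) (2*j) + spinN L σ (2*i+1) (2*j) +
      spinN L σ (2*i) (2*j+1) + spinN L σ (2*i+1) (2*j+1) = 0)
    (heq : blockSum L σ i j = 4) :
    (spinN L σ (2*i) (2*j) + spinN L σ (2*i+1) (2*j+1) = 0) ∧
    (spinN L σ (2*i+1) (2*j) + spinN L σ (2*i) (2*j+1) = 0) ∧
    spinN L σ (2*i+1) (2*j) * spinN L σ (2*i+2) (2*j) = 1 ∧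
    spinN L σ (2*i) (2*j+1) * spinN L σ (2*i) (2*j+2) = 1 ∧
    spinN L σ (2*i+1) (2*j+1) * spinN L σ (2*i+2) (2*j+1) = 1 ∧
    spinN L σ (2*i+1) (2*j+1) * spinN L σ (2*i+1) (2*j+2) = 1 := by
  unfold blockSum at heq
  set A := spinN L σ (2*i) (2*j)
  set B := spinN L σ (2*i+1) (2*j)
  set C := spinN L σ (2*i) (2*j+1)
  set D := spinN L σ (2*i+1) (2*j+1)
  have hint : A*B + A*C + B*D + C*D = -(A+D)^2 := by linear_combination (A+D) * hz
  have e1 := pm_mul_le_one (spinN_cases L σ (2*i+1) (2*j)) (spinN_cases L σ (2*i+2) (2*j))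
  have e2 := pm_mul_le_one (spinN_cases L σ (2*i) (2*j+1)) (spinN_cases L σ (2*i) (2*j+2))
  have e3 := pm_mul_le_one (spinN_cases L σ (2*i+1) (2*j+1)) (spinN_cases L σ (2*i+2) (2*j+1))
  have e4 := pm_mul_le_one (spinN_cases L σ (2*i+1) (2*j+1)) (spinN_cases L σ (2*i+1) (2*j+2))
  have hsq : (A+D)^2 = 0 := by nlinarith [sq_nonneg (A+D)]
  have hAD : A + D = 0 := sq_eq_zero_iff.mp hsq
  refine ⟨hAD, by linarith, ?_, ?_, ?_, ?_⟩ <;> nlinarith [sq_nonneg (A+D)]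

/-! ### Classification of the minimizers -/

lemma classify_row (G : ℕ → ℕ → Bool)
    (hA : ∀ i j, G (2*i) (2*j) = !G (2*i+1) (2*j+1))
    (hB : ∀ i j, G (2*i+1) (2*j) = !G (2*i) (2*j+1))
    (hC1 : ∀ i j, G (2*i+1) (2*j) = G (2*i+2) (2*j))
    (hC2 : ∀ i j, G (2*i+1) (2*j+1) = G (2*i+2) (2*j+1))
    (hD1 : ∀ i j, G (2*i) (2*j+1) = G (2*i) (2*j+2))
    (hD2 : ∀ i j, G (2*i+1) (2*j+1) = G (2*i+1) (2*j+2))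
    (hbase : G 1 0 = G 0 0) :
    ∀ u v, G u v = (qA v == G 0 0) := by
  set a : ℕ → ℕ → Bool := fun i j => G (2*i) (2*j) with ha
  have F1 : ∀ i j, G (2*i+1) (2*j) = a (i+1) j := by
    intro i j; rw [hC1]; show G (2*(i+1)) (2*j) = _; rfl
  have F2 : ∀ i j, G (2*i) (2*j+1) = a i (j+1) := by
    intro i j; rw [hD1]; show G (2*i) (2*(j+1)) = _; rfl
  have F3 : ∀ i j, G (2*i+1) (2*j+1) = a (i+1) (j+1) := by
    intro i j
    rw [hC2]
    have : G (2*i+2) (2*j+1) = G (2*(i+1)) (2*j+1) := by ring_nf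
    rw [this, F2]
  have rel1 : ∀ i j, a (i+1) (j+1) = !a i j := by
    intro i j
    have := hA i j
    rw [F3] at this
    have h' : a i j = !a (i+1) (j+1) := this
    rw [h', Bool.not_not]
  have rel2 : ∀ i j, a i (j+1) = !a (i+1) j := by
    intro i j
    have := hB i j
    rw [F1, F2] at this
    rw [this, Bool.not_not]
  have per2h : ∀ i j, a (i+2) j = a i j := by
    intro i j
    have h1 : a (i+1) (j+1) = !a (i+2) j := rel2 (i+1) j
    have h2 : a (i+1) (j+1) = !a i j := rel1 i j
    have := h1.symm.trans h2
    exact Bool.not_inj this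
  have per2v : ∀ i j, a i (j+2) = a i j := by
    intro i j
    have h1 : a i (j+2) = !a (i+1) (j+1) := rel2 i (j+1)
    rw [h1, rel1, Bool.not_not]
  have a00 : a 0 0 = G 0 0 := rfl
  have a10 : a 1 0 = G 0 0 := by
    have : a 1 0 = G 1 0 := by
      have := F1 0 0; simpa using this.symm
    rw [this, hbase]
  have a01 : a 0 1 = !G 0 0 := by
    have := rel2 0 0; rw [this, a10]
  have a11 : a 1 1 = !G 0 0 := by
    have := rel1 0 0; rw [this, a00]
  have redh : ∀ i j, a i j = a (i % 2) j := by
    intro i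
    induction i using Nat.strong_induction_on with
    | _ i ih =>
      intro j
      match i with
      | 0 => rfl
      | 1 => rfl
      | (k+2) =>
        rw [per2h k j, ih k (by omega) j]
        congr 1
        omega
  have redv : ∀ i j, a i j = a i (j % 2) := by
    intro i j
    induction j using Nat.strong_induction_on with
    | _ j ih =>
      match j with
      | 0 => rfl
      | 1 => rfl
      | (k+2) =>
        rw [per2v i k, ih k (by omega)]
        congr 1
        omega
  have aval : ∀ i j, a i j = ((decide (j % 2 = 0)) == G 0 0) := by
    intro i j
    rw [redh, redv]
    have hi : i % 2 = 0 ∨ i % 2 = 1 := by omega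
    have hj : j % 2 = 0 ∨ j % 2 = 1 := by omega
    rcases hi with hi | hi <;> rcases hj with hj | hj <;> rw [hi, hj] <;>
      simp [a00, a10, a01, a11, hj]
  intro u v
  have hu : u = 2 * (u / 2) + u % 2 := by omega
  have hv : v = 2 * (v / 2) + v % 2 := by omega
  have hu2 : u % 2 = 0 ∨ u % 2 = 1 := by omega
  have hv2 : v % 2 = 0 ∨ v % 2 = 1 := by omega
  have hq0 : v % 2 = 0 → qA v = decide ((v/2) % 2 = 0) := by
    intro h
    unfold qA
    have h4 : v % 4 = 2 * ((v/2) % 2) := by omega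
    rcases (by omega : (v/2) % 2 = 0 ∨ (v/2) % 2 = 1) with hk | hk <;>
      rw [hk] at h4 <;> simp [h4, hk]
  have hq1 : v % 2 = 1 → qA v = decide ((v/2) % 2 = 1) := by
    intro h
    unfold qA
    have h4 : v % 4 = 2 * ((v/2) % 2) + 1 := by omega
    rcases (by omega : (v/2) % 2 = 0 ∨ (v/2) % 2 = 1) with hk | hk <;>
      rw [hk] at h4 <;> simp [h4, hk]
  rcases hu2 with h | h <;> rcases hv2 with h' | h'
  · conv_lhs => rw [hu, hv, h, h', add_zero, add_zero]
    rw [show G (2*(u/2)) (2*(v/2)) = a (u/2) (v/2) from rfl, aval, hq0 h']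
  · conv_lhs => rw [hu, hv, h, h', add_zero]
    rw [F2, aval, hq1 h']
    congr 1
    simp only [decide_eq_decide]
    omega
  · conv_lhs => rw [hu, hv, h, h', add_zero]
    rw [F1, aval, hq0 h']
  · conv_lhs => rw [hu, hv, h, h']
    rw [F3, aval, hq1 h']
    congr 1
    simp only [decide_eq_decide]
    omega

lemma cast_red (L m : ℕ) [NeZero L] (hm : L = 2 * m) (i r : ℕ) :
    ((2 * i + r : ℕ) : ZMod L) = ((2 * (i % m) + r : ℕ) : ZMod L) := by
  have key : (2 * i + r : ℕ) = 2 * (i % m) + r + (i / m) * L := by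
    calc 2 * i + r = 2 * (m * (i / m) + i % m) + r := by rw [Nat.div_add_mod]
    _ = 2 * (i % m) + r + (i / m) * (2 * m) := by ring
    _ = 2 * (i % m) + r + (i / m) * L := by rw [← hm]
  rw [key]
  push_cast
  simp [ZMod.natCast_self]

lemma all_blocks_eq {α : Type*} [Fintype α] (f : α → ℤ) (hle : ∀ i, f i ≤ 4)
    (hsum : ∑ i, f i = (Fintype.card α) * 4) : ∀ i, f i = 4 := by
  intro i
  by_contra hne
  have hlt : f i < 4 := lt_of_le_of_ne (hle i) hne
  have hs := Finset.sum_lt_sum (s := Finset.univ) (f := f) (g := fun _ => (4:ℤ))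
    (fun j _ => hle j) ⟨i, Finset.mem_univ i, hlt⟩
  rw [Finset.sum_const, Finset.card_univ, nsmul_eq_mul] at hs
  rw [hsum] at hs
  exact lt_irrefl _ hs

end Aux

/-- On a torus of side `L` divisible by 4, the minimal energy of the constrained Ising
model `I⁽⁶⁾` (each 2×2 block of the fixed partition has total spin zero) is `−L²`
(half of the unconstrained minimum `−2L²`), and it is attained exactly by the four
layered configurations. -/
theorem stmt11 (L : ℕ) [NeZero L] (hL : 4 ∣ L) :
    IsLeast {E : ℤ | ∃ σ : ZMod L × ZMod L → Bool, P6 L σ ∧ torusEnergy L σ = E}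
      (-(L : ℤ) ^ 2) ∧
    ∀ σ : ZMod L × ZMod L → Bool, P6 L σ →
      (torusEnergy L σ = -(L : ℤ) ^ 2 ↔
        (σ = rowLayerA L ∨ σ = rowLayerB L ∨ σ = colLayerA L ∨ σ = colLayerB L)) := by
  have hLpos : 0 < L := Nat.pos_of_ne_zero (NeZero.ne L)
  obtain ⟨k, hk⟩ := hL
  have hm : L = 2 * (L / 2) := by omega
  set m := L / 2 with hmdef
  have hmpos : 0 < m := by omega
  have hcard : (Fintype.card (Fin m × Fin m) : ℤ) = (m : ℤ) * m := by
    simp [Fintype.card_prod]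
  have hL2 : ((L : ℤ)) ^ 2 = ((m : ℤ) * m) * 4 := by
    have : (L : ℤ) = 2 * (m : ℤ) := by exact_mod_cast congrArg (Nat.cast : ℕ → ℤ) hm
    rw [this]; ring
  -- the lower bound
  have lb : ∀ σ : ZMod L × ZMod L → Bool, P6 L σ → -(L : ℤ) ^ 2 ≤ torusEnergy L σ := by
    intro σ h6
    rw [energy_blocks L hm σ]
    have hle : ∑ p : Fin m × Fin m, blockSum L σ p.1.1 p.2.1 ≤ ((m : ℤ) * m) * 4 := by
      calc ∑ p : Fin m × Fin m, blockSum L σ p.1.1 p.2.1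
          ≤ ∑ _p : Fin m × Fin m, (4 : ℤ) :=
            Finset.sum_le_sum (fun p _ => blockSum_le L σ p.1.1 p.2.1 (P6_spinN L σ h6 p))
        _ = ((m : ℤ) * m) * 4 := by
            rw [Finset.sum_const, Finset.card_univ, nsmul_eq_mul]
            push_cast [Fintype.card_prod, Fintype.card_fin]
            ring
    rw [hL2]
    linarith
  refine ⟨⟨⟨rowLayerA L, P6_rowLayerA L ⟨k, hk⟩, energy_rowLayerA L ⟨k, hk⟩⟩, ?_⟩, ?_⟩
  · rintro E ⟨σ, h6, hEe⟩
    rw [← hEe]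
    exact lb σ h6
  · intro σ h6
    constructor
    · -- equality implies layered
      intro hE
      -- all blocks attain the maximum
      have hsum : ∑ p : Fin m × Fin m, blockSum L σ p.1.1 p.2.1 = (Fintype.card (Fin m × Fin m)) * 4 := by
        have := energy_blocks L hm σ
        rw [hE] at this
        have h2 : ∑ p : Fin m × Fin m, blockSum L σ p.1.1 p.2.1 = (L : ℤ) ^ 2 := by linarith
        rw [h2, hL2]
        push_cast [Fintype.card_prod, Fintype.card_fin]
        ring
      have hall : ∀ p : Fin m × Fin m, blockSum L σ p.1.1 p.2.1 = 4 :=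
        all_blocks_eq _ (fun p => blockSum_le L σ p.1.1 p.2.1 (P6_spinN L σ h6 p)) hsum
      have hfacts : ∀ p : Fin m × Fin m, _ :=
        fun p => blockSum_eq L σ p.1.1 p.2.1 (P6_spinN L σ h6 p) (hall p)
      -- pass to natural coordinates
      set G : ℕ → ℕ → Bool := fun u v => σ ((u : ZMod L), (v : ZMod L)) with hG
      have Gc : ∀ i r j s : ℕ, G (2*i+r) (2*j+s) = G (2*(i%m)+r) (2*(j%m)+s) := by
        intro i r j s
        rw [hG]
        dsimp only
        rw [cast_red L m hm i r, cast_red L m hm j s]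
      have Gc0 : ∀ i j s : ℕ, G (2*i) (2*j+s) = G (2*(i%m)) (2*(j%m)+s) := by
        intro i j s
        have := Gc i 0 j s
        simpa using this
      have Gc0' : ∀ i r j : ℕ, G (2*i+r) (2*j) = G (2*(i%m)+r) (2*(j%m)) := by
        intro i r j
        have := Gc i r j 0
        simpa using this
      have Gc00 : ∀ i j : ℕ, G (2*i) (2*j) = G (2*(i%m)) (2*(j%m)) := by
        intro i j
        have := Gc i 0 j 0
        simpa using this
      -- spins at mod-reduced block
      have pf : ∀ i j : ℕ, i % m < m ∧ j % m < m := fun i j => ⟨Nat.mod_lt _ hmpos, Nat.mod_lt _ hmpos⟩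
      have sp : ∀ u v : ℕ, spinN L σ u v = spin (G u v) := fun u v => rfl
      have hA : ∀ i j, G (2*i) (2*j) = !G (2*i+1) (2*j+1) := by
        intro i j
        obtain ⟨h1, _, _, _, _, _⟩ := hfacts (⟨i % m, (pf i j).1⟩, ⟨j % m, (pf i j).2⟩)
        rw [Gc00 i j, Gc i 1 j 1]
        exact spin_add_eq_zero h1
      have hB : ∀ i j, G (2*i+1) (2*j) = !G (2*i) (2*j+1) := by
        intro i j
        obtain ⟨_, h2, _, _, _, _⟩ := hfacts (⟨i % m, (pf i j).1⟩, ⟨j % m, (pf i j).2⟩)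
        rw [Gc0' i 1 j, Gc0 i j 1]
        exact spin_add_eq_zero h2
      have hC1 : ∀ i j, G (2*i+1) (2*j) = G (2*i+2) (2*j) := by
        intro i j
        obtain ⟨_, _, h3, _, _, _⟩ := hfacts (⟨i % m, (pf i j).1⟩, ⟨j % m, (pf i j).2⟩)
        rw [Gc0' i 1 j, Gc0' i 2 j]
        exact spin_mul_eq_one h3
      have hD1 : ∀ i j, G (2*i) (2*j+1) = G (2*i) (2*j+2) := by
        intro i j
        obtain ⟨_, _, _, h4, _, _⟩ := hfacts (⟨i % m, (pf i j).1⟩, ⟨j % m, (pf i j).2⟩)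
        rw [Gc0 i j 1, Gc0 i j 2]
        exact spin_mul_eq_one h4
      have hC2 : ∀ i j, G (2*i+1) (2*j+1) = G (2*i+2) (2*j+1) := by
        intro i j
        obtain ⟨_, _, _, _, h5, _⟩ := hfacts (⟨i % m, (pf i j).1⟩, ⟨j % m, (pf i j).2⟩)
        rw [Gc i 1 j 1, Gc i 2 j 1]
        exact spin_mul_eq_one h5
      have hD2 : ∀ i j, G (2*i+1) (2*j+1) = G (2*i+1) (2*j+2) := by
        intro i j
        obtain ⟨_, _, _, _, _, h6'⟩ := hfacts (⟨i % m, (pf i j).1⟩, ⟨j % m, (pf i j).2⟩)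
        rw [Gc i 1 j 1, Gc i 1 j 2]
        exact spin_mul_eq_one h6'
      -- rewrite σ in terms of G
      have hσG : ∀ v : ZMod L × ZMod L, σ v = G v.1.val v.2.val := by
        intro v
        rw [hG]
        dsimp only
        rw [ZMod.natCast_rightInverse v.1, ZMod.natCast_rightInverse v.2]
      by_cases hb : G 1 0 = G 0 0
      · -- row-layered
        have hclass := classify_row G hA hB hC1 hC2 hD1 hD2 hb
        cases h00 : G 0 0 with
        | true =>
          left
          funext v
          rw [hσG v, hclass, h00]
          show (qA v.2.val == true) = rowLayerA L v
          rw [show rowLayerA L v = qA v.2.val from rfl]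
          simp
        | false =>
          right; left
          funext v
          rw [hσG v, hclass, h00]
          show (qA v.2.val == false) = rowLayerB L v
          rw [show rowLayerB L v = qB v.2.val from rfl, ← not_qA]
          simp
      · -- column-layered
        have hb' : G 1 0 = !G 0 0 := Bool.eq_not_of_ne hb
        have hbase' : G 0 1 = G 0 0 := by
          have h := hB 0 0
          norm_num at h
          rw [hb'] at h
          exact (Bool.not_inj h).symm
        set G' : ℕ → ℕ → Bool := fun u v => G v u with hG'
        have hA' : ∀ i j, G' (2*i) (2*j) = !G' (2*i+1) (2*j+1) := fun i j => hA j i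
        have hB' : ∀ i j, G' (2*i+1) (2*j) = !G' (2*i) (2*j+1) := by
          intro i j
          show G (2*j) (2*i+1) = !G (2*j+1) (2*i)
          rw [hB j i, Bool.not_not]
        have hC1' : ∀ i j, G' (2*i+1) (2*j) = G' (2*i+2) (2*j) := fun i j => hD1 j i
        have hC2' : ∀ i j, G' (2*i+1) (2*j+1) = G' (2*i+2) (2*j+1) := fun i j => hD2 j i
        have hD1' : ∀ i j, G' (2*i) (2*j+1) = G' (2*i) (2*j+2) := fun i j => hC1 j i
        have hD2' : ∀ i j, G' (2*i+1) (2*j+1) = G' (2*i+1) (2*j+2) := fun i j => hC2 j i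
        have hclass := classify_row G' hA' hB' hC1' hC2' hD1' hD2' hbase'
        have hG'00 : G' 0 0 = G 0 0 := rfl
        cases h00 : G 0 0 with
        | true =>
          right; right; left
          funext v
          rw [hσG v]
          have : G v.1.val v.2.val = G' v.2.val v.1.val := rfl
          rw [this, hclass, hG'00, h00]
          show (qA v.1.val == true) = colLayerA L v
          rw [show colLayerA L v = qA v.1.val from rfl]
          simp
        | false =>
          right; right; right
          funext v
          rw [hσG v]
          have : G v.1.val v.2.val = G' v.2.val v.1.val := rfl
          rw [this, hclass, hG'00, h00]
          show (qA v.1.val == false) = colLayerB L v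
          rw [show colLayerB L v = qB v.1.val from rfl, ← not_qA]
          simp
    · rintro (rfl | rfl | rfl | rfl)
      · exact energy_rowLayerA L ⟨k, hk⟩
      · exact energy_rowLayerB L ⟨k, hk⟩
      · exact energy_colLayerA L ⟨k, hk⟩
      · exact energy_colLayerB L ⟨k, hk⟩
end
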